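/- Let S be a commutative ring and δ : S → S a derivation, extended entrywise to matrices over S and to the Laurent polynomial ring S[ε, ε⁻¹] by δ(ε) = 0. Let A(ε) be a filtration-compatible connection matrix with block sizes d₁, d₂, d₃, and suppose matrices R⁰₁₁, R⁰₂₂, R⁰₃₃ (invertible), R⁻¹₂₁, R⁻²₃₁, R⁻¹₃₂ over S satisfy the six equations of the first rotation step (δR⁰₁₁ = A⁰₁₁ R⁰₁₁ + A¹₁₂ R⁻¹₂₁; δR⁻¹₂₁ = A⁻¹₂₁ R⁰₁₁ + A⁰₂₂ R⁻¹₂₁ + A¹₂₃ R⁻²₃₁; δR⁻²₃₁ = A⁻²₃₁ R⁰₁₁ + A⁻¹₃₂ R⁻¹₂₁ + A⁰₃₃ R⁻²₃₁; δR⁰₂₂ = A⁰₂₂ R⁰₂₂ + A¹₂₃ R⁻¹₃₂ − R⁻¹₂₁ (R⁰₁₁)⁻¹ A¹₁₂ R⁰₂₂; δR⁻¹₃₂ = A⁻¹₃₂ R⁰₂₂ + A⁰₃₃ R⁻¹₃₂ − R⁻²₃₁ (R⁰₁₁)⁻¹ A¹₁₂ R⁰₂₂; δR⁰₃₃ = A⁰₃₃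 R⁰₃₃ − R⁻¹₃₂ (R⁰₂₂)⁻¹ A¹₂₃ R⁰₃₃). Suppose further that matrices R⁰₂₁ (d₂×d₁), R⁻¹₃₁ (d₃×d₁), R⁰₃₂ (d₃×d₂) over S satisfy: δR⁻¹₃₁ = (R⁰₃₃)⁻¹ { A⁻¹₃₁ R⁰₁₁ + A⁰₃₂ R⁻¹₂₁ + A¹₃₃ R⁻²₃₁ − R⁻¹₃₂ (R⁰₂₂)⁻¹ ( A⁰₂₁ R⁰₁₁ + A¹₂₂ R⁻¹₂₁ ) − [ R⁻²₃₁ − R⁻¹₃₂ (R⁰₂₂)⁻¹ R⁻¹₂₁ ] (R⁰₁₁)⁻¹ A¹₁₁ R⁰₁₁ }; δR⁰₂₁ = (R⁰₂₂)⁻¹ ( A⁰₂₁ R⁰₁₁ + A¹₂₂ R⁻¹₂₁ + A¹₂₃ R⁰₃₃ R⁻¹₃₁ − R⁻¹₂₁ (R⁰₁₁)⁻¹ A¹₁₁ R⁰₁₁ ); δR⁰₃₂ = (R⁰₃₃)⁻¹ ( A⁰₃₂ R⁰₂₂ + A¹₃₃ R⁻¹₃₂ − R⁻¹₃₂ (R⁰₂₂)⁻¹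 A¹₂₂ R⁰₂₂ ) − R⁻¹₃₁ (R⁰₁₁)⁻¹ A¹₁₂ R⁰₂₂. Let R(ε) = [[R⁰₁₁, 0, 0], [ε⁻¹ R⁻¹₂₁, R⁰₂₂, 0], [ε⁻² R⁻²₃₁, ε⁻¹ R⁻¹₃₂, R⁰₃₃]] and R′(ε) = [[1, 0, 0], [R⁰₂₁, 1, 0], [ε⁻¹ R⁻¹₃₁, R⁰₃₂, 1]] (with identity diagonal blocks). Then in the gauge transform of A(ε) by R(ε) R′(ε), all of the following Laurent coefficients vanish: block (1,1) at ε⁰; block (2,1) at ε⁻¹ and ε⁰; block (3,1) at ε⁻² and ε⁻¹; block (2,2) at ε⁰; block (3,2) at ε⁻¹ and ε⁰; block (3,3) at ε⁰. -/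

import Mathlib

set_option linter.unusedSectionVars false
set_option maxHeartbeats 4000000


open LaurentPolynomial

/-- The coefficient of `ε^k` in a Laurent polynomial in `ε`. -/
noncomputable def lcoeff {S : Type*} [Semiring S] (p : LaurentPolynomial S) (k : ℤ) : S :=
  p.coeff k

/-- The entrywise extension of a derivation `δ : S → S` to the Laurent polynomial ring
`S[ε, ε⁻¹]`, determined by `δ(ε) = 0`: it acts on each coefficient. -/
noncomputable def lder {S : Type*} [Semiring S] (δ : S → S) (h0 : δ 0 = 0)
    (p : LaurentPolynomial S) : LaurentPolynomial S :=
  AddMonoidAlgebra.ofCoeff (Finsupp.mapRange δ h0 p.coeff)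

/-- The matrix `ε^k M` over the Laurent polynomial ring. -/
noncomputable def lmat {S : Type*} [CommSemiring S] {m n : Type*} (k : ℤ)
    (M : Matrix m n S) : Matrix m n (LaurentPolynomial S) :=
  M.map fun a => T k * C a

/-- A 3×3 block matrix from its nine blocks. -/
def blk3 {S : Type*} {d₁ d₂ d₃ : ℕ}
    (M11 : Matrix (Fin d₁) (Fin d₁) S) (M12 : Matrix (Fin d₁) (Fin d₂) S)
    (M13 : Matrix (Fin d₁) (Fin d₃) S)
    (M21 : Matrix (Fin d₂) (Fin d₁) S) (M22 : Matrix (Fin d₂) (Fin d₂) S)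
    (M23 : Matrix (Fin d₂) (Fin d₃) S)
    (M31 : Matrix (Fin d₃) (Fin d₁) S) (M32 : Matrix (Fin d₃) (Fin d₂) S)
    (M33 : Matrix (Fin d₃) (Fin d₃) S) :
    Matrix (Fin d₁ ⊕ (Fin d₂ ⊕ Fin d₃)) (Fin d₁ ⊕ (Fin d₂ ⊕ Fin d₃)) S :=
  Matrix.of fun i j =>
    match i, j with
    | .inl a, .inl b => M11 a b
    | .inl a, .inr (.inl b) => M12 a b
    | .inl a, .inr (.inr b) => M13 a b
    | .inr (.inl a), .inl b => M21 a b
    | .inr (.inl a), .inr (.inl b) => M22 a b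
    | .inr (.inl a), .inr (.inr b) => M23 a b
    | .inr (.inr a), .inl b => M31 a b
    | .inr (.inr a), .inr (.inl b) => M32 a b
    | .inr (.inr a), .inr (.inr b) => M33 a b

/-- The filtration-compatible connection matrix
`A(ε) = [[A⁰₁₁+εA¹₁₁, εA¹₁₂, 0],
[ε⁻¹A⁻¹₂₁+A⁰₂₁+εA¹₂₁, A⁰₂₂+εA¹₂₂, εA¹₂₃],
[ε⁻²A⁻²₃₁+ε⁻¹A⁻¹₃₁+A⁰₃₁+εA¹₃₁, ε⁻¹A⁻¹₃₂+A⁰₃₂+εA¹₃₂, A⁰₃₃+εA¹₃₃]]`. -/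
noncomputable def connMat {S : Type*} [CommRing S] {d₁ d₂ d₃ : ℕ}
    (A011 A111 : Matrix (Fin d₁) (Fin d₁) S) (A112 : Matrix (Fin d₁) (Fin d₂) S)
    (Am121 A021 A121 : Matrix (Fin d₂) (Fin d₁) S)
    (A022 A122 : Matrix (Fin d₂) (Fin d₂) S) (A123 : Matrix (Fin d₂) (Fin d₃) S)
    (Am231 Am131 A031 A131 : Matrix (Fin d₃) (Fin d₁) S)
    (Am132 A032 A132 : Matrix (Fin d₃) (Fin d₂) S)
    (A033 A133 : Matrix (Fin d₃) (Fin d₃) S) :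
    Matrix (Fin d₁ ⊕ (Fin d₂ ⊕ Fin d₃)) (Fin d₁ ⊕ (Fin d₂ ⊕ Fin d₃))
      (LaurentPolynomial S) :=
  blk3 (lmat 0 A011 + lmat 1 A111) (lmat 1 A112) 0
    (lmat (-1) Am121 + lmat 0 A021 + lmat 1 A121) (lmat 0 A022 + lmat 1 A122) (lmat 1 A123)
    (lmat (-2) Am231 + lmat (-1) Am131 + lmat 0 A031 + lmat 1 A131)
    (lmat (-1) Am132 + lmat 0 A032 + lmat 1 A132) (lmat 0 A033 + lmat 1 A133)

/-- The gauge transform `Ã = R⁻¹ A R - R⁻¹ δR`. -/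
noncomputable def gaugeTransform {S : Type*} [CommRing S] {ι : Type*} [Fintype ι]
    [DecidableEq ι] (δ : S → S) (h0 : δ 0 = 0)
    (A R : Matrix ι ι (LaurentPolynomial S)) : Matrix ι ι (LaurentPolynomial S) :=
  R⁻¹ * A * R - R⁻¹ * R.map (lder δ h0)



section Infra
variable {S : Type*} [CommRing S] {m n p : Type*}

theorem TC_single (k : ℤ) (a : S) : T k * C a = (AddMonoidAlgebra.single k a : LaurentPolynomial S) := by
  rw [single_eq_C_mul_T, mul_comm]

theorem lcoeff_TC (k l : ℤ) (a : S) : lcoeff (T k * C a) l = if k = l then a else 0 := by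
  rw [TC_single]; exact Finsupp.single_apply

theorem lcoeff_add (p q : LaurentPolynomial S) (k : ℤ) :
    lcoeff (p + q) k = lcoeff p k + lcoeff q k := rfl

theorem lcoeff_sub (p q : LaurentPolynomial S) (k : ℤ) :
    lcoeff (p - q) k = lcoeff p k - lcoeff q k := rfl

theorem lder_TC (δ : S → S) (h0 : δ 0 = 0) (k : ℤ) (a : S) :
    lder δ h0 (T k * C a) = T k * C (δ a) := by
  rw [TC_single, TC_single, lder, AddMonoidAlgebra.coeff_single, Finsupp.mapRange_single, AddMonoidAlgebra.ofCoeff_single]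

theorem lder_add (δ : S → S) (h0 : δ 0 = 0) (hadd : ∀ a b, δ (a + b) = δ a + δ b)
    (p q : LaurentPolynomial S) :
    lder δ h0 (p + q) = lder δ h0 p + lder δ h0 q := by
  unfold lder
  exact congrArg AddMonoidAlgebra.ofCoeff (Finsupp.mapRange_add hadd p.coeff q.coeff)

theorem lmat_mul [Fintype n] (k l : ℤ) (M : Matrix m n S) (N : Matrix n p S) :
    lmat k M * lmat l N = lmat (k + l) (M * N) := by
  refine Matrix.ext fun i j => ?_
  simp only [lmat, Matrix.mul_apply, Matrix.map_apply, map_sum, T_add, Finset.mul_sum]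
  exact Finset.sum_congr rfl fun t _ => by rw [map_mul]; ring

theorem lmat_add (k : ℤ) (M N : Matrix m n S) :
    lmat k (M + N) = lmat k M + lmat k N := by
  refine Matrix.ext fun i j => ?_
  simp only [lmat, Matrix.map_apply, Matrix.add_apply, map_add]
  ring

theorem lmat_sub (k : ℤ) (M N : Matrix m n S) :
    lmat k (M - N) = lmat k M - lmat k N := by
  refine Matrix.ext fun i j => ?_
  simp only [lmat, Matrix.map_apply, Matrix.sub_apply, map_sub]
  ring

theorem lmat_zero (k : ℤ) : lmat k (0 : Matrix m n S) = 0 := by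
  refine Matrix.ext fun i j => ?_
  simp [lmat]

theorem lmat_one [DecidableEq n] : lmat 0 (1 : Matrix n n S) = 1 := by
  refine Matrix.ext fun i j => ?_
  simp only [lmat, Matrix.map_apply, Matrix.one_apply, T_zero, one_mul]
  split <;> simp

theorem lmat_map_lder (δ : S → S) (h0 : δ 0 = 0) (k : ℤ) (M : Matrix m n S) :
    (lmat k M).map (lder δ h0) = lmat k (M.map δ) := by
  refine Matrix.ext fun i j => ?_
  simp only [lmat, Matrix.map_apply]
  rw [TC_single, lder, AddMonoidAlgebra.coeff_single, Finsupp.mapRange_single, TC_single, AddMonoidAlgebra.ofCoeff_single]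

theorem lcoeff_lmat (k l : ℤ) (M : Matrix m n S) (i : m) (j : n) :
    lcoeff (lmat k M i j) l = if k = l then M i j else 0 := by
  simp only [lmat, Matrix.map_apply]
  rw [TC_single]
  exact Finsupp.single_apply

end Infra

section Blk
variable {R : Type*} [CommRing R] {d₁ d₂ d₃ : ℕ}
variable (M11 N11 : Matrix (Fin d₁) (Fin d₁) R) (M12 N12 : Matrix (Fin d₁) (Fin d₂) R)
    (M13 N13 : Matrix (Fin d₁) (Fin d₃) R)
    (M21 N21 : Matrix (Fin d₂) (Fin d₁) R) (M22 N22 : Matrix (Fin d₂) (Fin d₂) R)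
    (M23 N23 : Matrix (Fin d₂) (Fin d₃) R)
    (M31 N31 : Matrix (Fin d₃) (Fin d₁) R) (M32 N32 : Matrix (Fin d₃) (Fin d₂) R)
    (M33 N33 : Matrix (Fin d₃) (Fin d₃) R)

theorem blk3_mul :
    blk3 M11 M12 M13 M21 M22 M23 M31 M32 M33 * blk3 N11 N12 N13 N21 N22 N23 N31 N32 N33 =
    blk3 (M11*N11 + M12*N21 + M13*N31) (M11*N12 + M12*N22 + M13*N32) (M11*N13 + M12*N23 + M13*N33)
      (M21*N11 + M22*N21 + M23*N31) (M21*N12 + M22*N22 + M23*N32) (M21*N13 + M22*N23 + M23*N33)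
      (M31*N11 + M32*N21 + M33*N31) (M31*N12 + M32*N22 + M33*N32) (M31*N13 + M32*N23 + M33*N33) := by
  refine Matrix.ext fun i j => ?_
  rcases i with a | a | a <;> rcases j with b | b | b <;>
    simp [blk3, Matrix.mul_apply, Fintype.sum_sum_type, Matrix.add_apply, add_assoc]

theorem blk3_sub :
    blk3 M11 M12 M13 M21 M22 M23 M31 M32 M33 - blk3 N11 N12 N13 N21 N22 N23 N31 N32 N33 =
    blk3 (M11-N11) (M12-N12) (M13-N13) (M21-N21) (M22-N22) (M23-N23) (M31-N31) (M32-N32) (M33-N33) := by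
  refine Matrix.ext fun i j => ?_
  rcases i with a | a | a <;> rcases j with b | b | b <;> simp [blk3, Matrix.sub_apply]

theorem blk3_one : (@blk3 R d₁ d₂ d₃ 1 0 0 0 1 0 0 0 1) = 1 := by
  refine Matrix.ext fun i j => ?_
  rcases i with a | a | a <;> rcases j with b | b | b <;>
    simp [blk3, Matrix.one_apply, Sum.inl.injEq, Sum.inr.injEq]

theorem blk3_ext (h11 : M11 = N11) (h12 : M12 = N12) (h13 : M13 = N13)
    (h21 : M21 = N21) (h22 : M22 = N22) (h23 : M23 = N23)
    (h31 : M31 = N31) (h32 : M32 = N32) (h33 : M33 = N33) :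
    blk3 M11 M12 M13 M21 M22 M23 M31 M32 M33 = blk3 N11 N12 N13 N21 N22 N23 N31 N32 N33 := by
  subst h11 h12 h13 h21 h22 h23 h31 h32 h33; rfl

theorem blk3_map {R' : Type*} (f : R → R') :
    (blk3 M11 M12 M13 M21 M22 M23 M31 M32 M33).map f =
    blk3 (M11.map f) (M12.map f) (M13.map f) (M21.map f) (M22.map f) (M23.map f)
      (M31.map f) (M32.map f) (M33.map f) := by
  refine Matrix.ext fun i j => ?_
  rcases i with a | a | a <;> rcases j with b | b | b <;> rfl

@[simp] theorem blk3_app11 (a b) : blk3 M11 M12 M13 M21 M22 M23 M31 M32 M33 (.inl a) (.inl b) = M11 a b := rfl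
@[simp] theorem blk3_app21 (a b) : blk3 M11 M12 M13 M21 M22 M23 M31 M32 M33 (.inr (.inl a)) (.inl b) = M21 a b := rfl
@[simp] theorem blk3_app31 (a b) : blk3 M11 M12 M13 M21 M22 M23 M31 M32 M33 (.inr (.inr a)) (.inl b) = M31 a b := rfl
@[simp] theorem blk3_app22 (a b) : blk3 M11 M12 M13 M21 M22 M23 M31 M32 M33 (.inr (.inl a)) (.inr (.inl b)) = M22 a b := rfl
@[simp] theorem blk3_app32 (a b) : blk3 M11 M12 M13 M21 M22 M23 M31 M32 M33 (.inr (.inr a)) (.inr (.inl b)) = M32 a b := rfl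
@[simp] theorem blk3_app33 (a b) : blk3 M11 M12 M13 M21 M22 M23 M31 M32 M33 (.inr (.inr a)) (.inr (.inr b)) = M33 a b := rfl

end Blk

section D
variable {S : Type*} [CommRing S] (δ : S → S) (h0 : δ 0 = 0)

theorem TC_single' (k : ℤ) (a : S) : T k * C a = (AddMonoidAlgebra.single k a : LaurentPolynomial S) := by
  rw [single_eq_C_mul_T, mul_comm]

theorem lder_TC' (k : ℤ) (a : S) : lder δ h0 (T k * C a) = T k * C (δ a) := by
  rw [TC_single', TC_single', lder, AddMonoidAlgebra.coeff_single, Finsupp.mapRange_single, AddMonoidAlgebra.ofCoeff_single]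

theorem lder_add' (hadd : ∀ a b, δ (a + b) = δ a + δ b) (p q : LaurentPolynomial S) :
    lder δ h0 (p + q) = lder δ h0 p + lder δ h0 q :=
  congrArg AddMonoidAlgebra.ofCoeff (Finsupp.mapRange_add hadd p.coeff q.coeff)

theorem lder_mul (hadd : ∀ a b, δ (a + b) = δ a + δ b)
    (hmul : ∀ a b, δ (a * b) = δ a * b + a * δ b) (p q : LaurentPolynomial S) :
    lder δ h0 (p * q) = lder δ h0 p * q + p * lder δ h0 q := by
  induction p using LaurentPolynomial.induction_on' with
  | add f g hf hg =>
    rw [add_mul, lder_add' δ h0 hadd, lder_add' δ h0 hadd, hf, hg]; ring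
  | C_mul_T n a =>
    induction q using LaurentPolynomial.induction_on' with
    | add f g hf hg =>
      rw [mul_add, lder_add' δ h0 hadd, lder_add' δ h0 hadd, hf, hg]; ring
    | C_mul_T m b =>
      have h1 : (C a * T n) * (C b * T m) = T (n + m) * C (a * b) := by
        rw [T_add, map_mul]; ring
      have h2 : ∀ (k : ℤ) (x : S), C x * T k = T k * C x := fun k x => mul_comm _ _
      rw [h1, lder_TC' δ h0, hmul, h2, h2, lder_TC' δ h0, lder_TC' δ h0, map_add, map_mul,
        map_mul, T_add, mul_add]
      ring

theorem map_derivation_mul {T : Type*} [CommRing T] (D : T → T)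
    (hDadd : ∀ a b, D (a + b) = D a + D b) (hDmul : ∀ a b, D (a * b) = D a * b + a * D b)
    {m n p : Type*} [Fintype n] (M : Matrix m n T) (N : Matrix n p T) :
    (M * N).map D = M.map D * N + M * N.map D := by
  refine Matrix.ext fun i j => ?_
  simp only [Matrix.map_apply, Matrix.mul_apply, Matrix.add_apply]
  rw [show D (∑ t, M i t * N t j) = ∑ t, D (M i t * N t j) from
    map_sum (AddMonoidHom.mk' D hDadd) _ _, ← Finset.sum_add_distrib]
  exact Finset.sum_congr rfl fun t _ => hDmul _ _

end D

section Extra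
variable {S : Type*} [CommRing S] {m n : Type*} (δ : S → S) (h0 : δ 0 = 0)

theorem lmat_neg (k : ℤ) (M : Matrix m n S) : lmat k (-M) = -(lmat k M) := by
  refine Matrix.ext fun i j => ?_
  simp only [lmat, Matrix.map_apply, Matrix.neg_apply, map_neg, mul_neg]

theorem lder_zero : lder δ h0 (0 : LaurentPolynomial S) = 0 := by
  simp [lder]

theorem lder_one (hδ1 : δ 1 = 0) : lder δ h0 (1 : LaurentPolynomial S) = 0 := by
  have h : (1 : LaurentPolynomial S) = T 0 * C 1 := by simp
  rw [h, lder_TC δ h0, hδ1]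
  simp

theorem lmap_zero : (0 : Matrix m n (LaurentPolynomial S)).map (lder δ h0) = 0 := by
  refine Matrix.ext fun i j => ?_
  simp [Matrix.map_apply, lder_zero]

theorem lmap_one [DecidableEq n] (hδ1 : δ 1 = 0) :
    (1 : Matrix n n (LaurentPolynomial S)).map (lder δ h0) = 0 := by
  refine Matrix.ext fun i j => ?_
  by_cases h : i = j <;>
    simp [Matrix.map_apply, Matrix.one_apply, h, lder_zero, lder_one δ h0 hδ1]

noncomputable def lcoeffM (M : Matrix m n (LaurentPolynomial S)) (k : ℤ) : Matrix m n S :=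
  Matrix.of fun i j => lcoeff (M i j) k

theorem lcoeff_eq_lcoeffM (M : Matrix m n (LaurentPolynomial S)) (i : m) (j : n) (k : ℤ) :
    lcoeff (M i j) k = lcoeffM M k i j := rfl

theorem lcoeffM_add (M N : Matrix m n (LaurentPolynomial S)) (k : ℤ) :
    lcoeffM (M + N) k = lcoeffM M k + lcoeffM N k := rfl

theorem lcoeffM_sub (M N : Matrix m n (LaurentPolynomial S)) (k : ℤ) :
    lcoeffM (M - N) k = lcoeffM M k - lcoeffM N k := rfl

theorem lcoeffM_neg (M : Matrix m n (LaurentPolynomial S)) (k : ℤ) :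
    lcoeffM (-M) k = -(lcoeffM M k) := rfl

theorem lcoeffM_zero (k : ℤ) : lcoeffM (0 : Matrix m n (LaurentPolynomial S)) k = 0 := rfl

theorem lcoeffM_lmat (l k : ℤ) (M : Matrix m n S) :
    lcoeffM (lmat l M) k = if l = k then M else 0 := by
  refine Matrix.ext fun i j => ?_
  rw [show lcoeffM (lmat l M) k i j = lcoeff (lmat l M i j) k from rfl, lcoeff_lmat]
  split <;> simp

theorem lcoeffM_blk3 {d₁ d₂ d₃ : ℕ}
    (M11 : Matrix (Fin d₁) (Fin d₁) (LaurentPolynomial S)) (M12 : Matrix (Fin d₁) (Fin d₂) (LaurentPolynomial S))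
    (M13 : Matrix (Fin d₁) (Fin d₃) (LaurentPolynomial S))
    (M21 : Matrix (Fin d₂) (Fin d₁) (LaurentPolynomial S)) (M22 : Matrix (Fin d₂) (Fin d₂) (LaurentPolynomial S))
    (M23 : Matrix (Fin d₂) (Fin d₃) (LaurentPolynomial S))
    (M31 : Matrix (Fin d₃) (Fin d₁) (LaurentPolynomial S)) (M32 : Matrix (Fin d₃) (Fin d₂) (LaurentPolynomial S))
    (M33 : Matrix (Fin d₃) (Fin d₃) (LaurentPolynomial S)) (k : ℤ) :
    lcoeffM (blk3 M11 M12 M13 M21 M22 M23 M31 M32 M33) k =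
    blk3 (lcoeffM M11 k) (lcoeffM M12 k) (lcoeffM M13 k) (lcoeffM M21 k) (lcoeffM M22 k)
      (lcoeffM M23 k) (lcoeffM M31 k) (lcoeffM M32 k) (lcoeffM M33 k) := by
  refine Matrix.ext fun i j => ?_
  rcases i with a | a | a <;> rcases j with b | b | b <;> rfl

theorem blk3_add {R : Type*} [CommRing R] {d₁ d₂ d₃ : ℕ}
    (M11 N11 : Matrix (Fin d₁) (Fin d₁) R) (M12 N12 : Matrix (Fin d₁) (Fin d₂) R)
    (M13 N13 : Matrix (Fin d₁) (Fin d₃) R)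
    (M21 N21 : Matrix (Fin d₂) (Fin d₁) R) (M22 N22 : Matrix (Fin d₂) (Fin d₂) R)
    (M23 N23 : Matrix (Fin d₂) (Fin d₃) R)
    (M31 N31 : Matrix (Fin d₃) (Fin d₁) R) (M32 N32 : Matrix (Fin d₃) (Fin d₂) R)
    (M33 N33 : Matrix (Fin d₃) (Fin d₃) R) :
    blk3 M11 M12 M13 M21 M22 M23 M31 M32 M33 + blk3 N11 N12 N13 N21 N22 N23 N31 N32 N33 =
    blk3 (M11+N11) (M12+N12) (M13+N13) (M21+N21) (M22+N22) (M23+N23) (M31+N31) (M32+N32) (M33+N33) := by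
  refine Matrix.ext fun i j => ?_
  rcases i with a | a | a <;> rcases j with b | b | b <;> simp [blk3, Matrix.add_apply]

end Extra

/-- The second rotation step: if, in addition to the six equations of the first rotation
step, the matrices `R⁰₂₁, R⁻¹₃₁, R⁰₃₂` satisfy the three further differential equations,
then in the gauge transform of `A(ε)` by `R(ε) R′(ε)`, with
`R(ε) = [[R⁰₁₁,0,0],[ε⁻¹R⁻¹₂₁,R⁰₂₂,0],[ε⁻²R⁻²₃₁,ε⁻¹R⁻¹₃₂,R⁰₃₃]]` and
`R′(ε) = [[1,0,0],[R⁰₂₁,1,0],[ε⁻¹R⁻¹₃₁,R⁰₃₂,1]]`, all terms of B-order `-2` and `-1`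
vanish: block (1,1) at `ε⁰`; block (2,1) at `ε⁻¹` and `ε⁰`; block (3,1) at `ε⁻²` and
`ε⁻¹`; block (2,2) at `ε⁰`; block (3,2) at `ε⁻¹` and `ε⁰`; block (3,3) at `ε⁰`. -/
theorem rotation_step2_removes_Border_minus1
    {S : Type*} [CommRing S] (δ : S → S) (hδ0 : δ 0 = 0)
    (hδadd : ∀ a b, δ (a + b) = δ a + δ b)
    (hδmul : ∀ a b, δ (a * b) = δ a * b + a * δ b)
    {d₁ d₂ d₃ : ℕ}
    (A011 A111 : Matrix (Fin d₁) (Fin d₁) S) (A112 : Matrix (Fin d₁) (Fin d₂) S)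
    (Am121 A021 A121 : Matrix (Fin d₂) (Fin d₁) S)
    (A022 A122 : Matrix (Fin d₂) (Fin d₂) S) (A123 : Matrix (Fin d₂) (Fin d₃) S)
    (Am231 Am131 A031 A131 : Matrix (Fin d₃) (Fin d₁) S)
    (Am132 A032 A132 : Matrix (Fin d₃) (Fin d₂) S)
    (A033 A133 : Matrix (Fin d₃) (Fin d₃) S)
    (R011 : Matrix (Fin d₁) (Fin d₁) S) (hR011 : IsUnit R011.det)
    (R022 : Matrix (Fin d₂) (Fin d₂) S) (hR022 : IsUnit R022.det)
    (R033 : Matrix (Fin d₃) (Fin d₃) S) (hR033 : IsUnit R033.det)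
    (Rm121 : Matrix (Fin d₂) (Fin d₁) S) (Rm231 : Matrix (Fin d₃) (Fin d₁) S)
    (Rm132 : Matrix (Fin d₃) (Fin d₂) S)
    (R021 : Matrix (Fin d₂) (Fin d₁) S) (Rm131 : Matrix (Fin d₃) (Fin d₁) S)
    (R032 : Matrix (Fin d₃) (Fin d₂) S)
    (heq1 : R011.map δ = A011 * R011 + A112 * Rm121)
    (heq2 : Rm121.map δ = Am121 * R011 + A022 * Rm121 + A123 * Rm231)
    (heq3 : Rm231.map δ = Am231 * R011 + Am132 * Rm121 + A033 * Rm231)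
    (heq4 : R022.map δ = A022 * R022 + A123 * Rm132 - Rm121 * R011⁻¹ * A112 * R022)
    (heq5 : Rm132.map δ = Am132 * R022 + A033 * Rm132 - Rm231 * R011⁻¹ * A112 * R022)
    (heq6 : R033.map δ = A033 * R033 - Rm132 * R022⁻¹ * A123 * R033)
    (heq7 : Rm131.map δ = R033⁻¹ *
      (Am131 * R011 + A032 * Rm121 + A133 * Rm231
        - Rm132 * R022⁻¹ * (A021 * R011 + A122 * Rm121)
        - (Rm231 - Rm132 * R022⁻¹ * Rm121) * R011⁻¹ * A111 * R011))
    (heq8 : R021.map δ = R022⁻¹ *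
      (A021 * R011 + A122 * Rm121 + A123 * R033 * Rm131
        - Rm121 * R011⁻¹ * A111 * R011))
    (heq9 : R032.map δ = R033⁻¹ *
      (A032 * R022 + A133 * Rm132 - Rm132 * R022⁻¹ * A122 * R022)
        - Rm131 * R011⁻¹ * A112 * R022) :
    let Aε := connMat A011 A111 A112 Am121 A021 A121 A022 A122 A123
      Am231 Am131 A031 A131 Am132 A032 A132 A033 A133
    let Rε := blk3 (lmat 0 R011) 0 0
      (lmat (-1) Rm121) (lmat 0 R022) 0
      (lmat (-2) Rm231) (lmat (-1) Rm132) (lmat 0 R033)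
    let R'ε := blk3 1 0 0
      (lmat 0 R021) 1 0
      (lmat (-1) Rm131) (lmat 0 R032) 1
    let Atil := gaugeTransform δ hδ0 Aε (Rε * R'ε)
    (∀ a b, lcoeff (Atil (Sum.inl a) (Sum.inl b)) 0 = 0) ∧
    (∀ a b, lcoeff (Atil (Sum.inr (Sum.inl a)) (Sum.inl b)) (-1) = 0) ∧
    (∀ a b, lcoeff (Atil (Sum.inr (Sum.inl a)) (Sum.inl b)) 0 = 0) ∧
    (∀ a b, lcoeff (Atil (Sum.inr (Sum.inr a)) (Sum.inl b)) (-2) = 0) ∧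
    (∀ a b, lcoeff (Atil (Sum.inr (Sum.inr a)) (Sum.inl b)) (-1) = 0) ∧
    (∀ a b, lcoeff (Atil (Sum.inr (Sum.inl a)) (Sum.inr (Sum.inl b))) 0 = 0) ∧
    (∀ a b, lcoeff (Atil (Sum.inr (Sum.inr a)) (Sum.inr (Sum.inl b))) (-1) = 0) ∧
    (∀ a b, lcoeff (Atil (Sum.inr (Sum.inr a)) (Sum.inr (Sum.inl b))) 0 = 0) ∧
    (∀ a b, lcoeff (Atil (Sum.inr (Sum.inr a)) (Sum.inr (Sum.inr b))) 0 = 0) := by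
  intro Aε Rε R'ε Atil
  have hδ1 : δ 1 = 0 := by
    have h := hδmul 1 1
    simp only [mul_one, one_mul] at h
    have h2 : δ 1 + δ 1 = δ 1 + 0 := by rw [add_zero]; exact h.symm
    exact add_left_cancel h2
  have hRinv : Rε * (blk3 (lmat 0 R011⁻¹) 0 0
      (lmat (-1) (-(R022⁻¹ * (Rm121 * R011⁻¹)))) (lmat 0 R022⁻¹) 0
      (lmat (-2) (R033⁻¹ * (Rm132 * (R022⁻¹ * (Rm121 * R011⁻¹))) - R033⁻¹ * (Rm231 * R011⁻¹)))
      (lmat (-1) (-(R033⁻¹ * (Rm132 * R022⁻¹)))) (lmat 0 R033⁻¹)) = 1 := by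
    simp only [Rε]
    rw [blk3_mul]
    refine Eq.trans ?_ blk3_one
    apply blk3_ext <;> simp [Matrix.mul_add, Matrix.add_mul, Matrix.mul_sub, Matrix.sub_mul, Matrix.neg_mul, Matrix.mul_neg, Matrix.mul_assoc, Matrix.mul_one, Matrix.one_mul, Matrix.mul_zero, Matrix.zero_mul, lmat_mul, lmat_add, lmat_sub, lmat_neg, lmat_zero, lmat_one, Matrix.mul_nonsing_inv_cancel_left, Matrix.nonsing_inv_mul_cancel_left, Matrix.mul_nonsing_inv, Matrix.nonsing_inv_mul, hR011, hR022, hR033] <;> abel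
  have hR'inv : R'ε * (blk3 1 0 0
      (lmat 0 (-R021)) 1 0
      (lmat 0 (R032 * R021) + lmat (-1) (-Rm131)) (lmat 0 (-R032)) 1) = 1 := by
    simp only [R'ε]
    rw [blk3_mul]
    refine Eq.trans ?_ blk3_one
    apply blk3_ext <;> simp [Matrix.mul_add, Matrix.add_mul, Matrix.mul_sub, Matrix.sub_mul, Matrix.neg_mul, Matrix.mul_neg, Matrix.mul_assoc, Matrix.mul_one, Matrix.one_mul, Matrix.mul_zero, Matrix.zero_mul, lmat_mul, lmat_add, lmat_sub, lmat_neg, lmat_zero, lmat_one, Matrix.mul_nonsing_inv_cancel_left, Matrix.nonsing_inv_mul_cancel_left, Matrix.mul_nonsing_inv, Matrix.nonsing_inv_mul, hR011, hR022, hR033] <;> abel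
  have hprod : (Rε * R'ε) * ((blk3 1 0 0
      (lmat 0 (-R021)) 1 0
      (lmat 0 (R032 * R021) + lmat (-1) (-Rm131)) (lmat 0 (-R032)) 1) * (blk3 (lmat 0 R011⁻¹) 0 0
      (lmat (-1) (-(R022⁻¹ * (Rm121 * R011⁻¹)))) (lmat 0 R022⁻¹) 0
      (lmat (-2) (R033⁻¹ * (Rm132 * (R022⁻¹ * (Rm121 * R011⁻¹))) - R033⁻¹ * (Rm231 * R011⁻¹)))
      (lmat (-1) (-(R033⁻¹ * (Rm132 * R022⁻¹)))) (lmat 0 R033⁻¹))) = 1 := by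
    calc (Rε * R'ε) * ((blk3 1 0 0
      (lmat 0 (-R021)) 1 0
      (lmat 0 (R032 * R021) + lmat (-1) (-Rm131)) (lmat 0 (-R032)) 1) * (blk3 (lmat 0 R011⁻¹) 0 0
      (lmat (-1) (-(R022⁻¹ * (Rm121 * R011⁻¹)))) (lmat 0 R022⁻¹) 0
      (lmat (-2) (R033⁻¹ * (Rm132 * (R022⁻¹ * (Rm121 * R011⁻¹))) - R033⁻¹ * (Rm231 * R011⁻¹)))
      (lmat (-1) (-(R033⁻¹ * (Rm132 * R022⁻¹)))) (lmat 0 R033⁻¹)))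
        = Rε * ((R'ε * (blk3 1 0 0
      (lmat 0 (-R021)) 1 0
      (lmat 0 (R032 * R021) + lmat (-1) (-Rm131)) (lmat 0 (-R032)) 1)) * (blk3 (lmat 0 R011⁻¹) 0 0
      (lmat (-1) (-(R022⁻¹ * (Rm121 * R011⁻¹)))) (lmat 0 R022⁻¹) 0
      (lmat (-2) (R033⁻¹ * (Rm132 * (R022⁻¹ * (Rm121 * R011⁻¹))) - R033⁻¹ * (Rm231 * R011⁻¹)))
      (lmat (-1) (-(R033⁻¹ * (Rm132 * R022⁻¹)))) (lmat 0 R033⁻¹))) := by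
          rw [Matrix.mul_assoc, Matrix.mul_assoc]
      _ = 1 := by rw [hR'inv, Matrix.one_mul, hRinv]
  have hInveq : (Rε * R'ε)⁻¹ = (blk3 1 0 0
      (lmat 0 (-R021)) 1 0
      (lmat 0 (R032 * R021) + lmat (-1) (-Rm131)) (lmat 0 (-R032)) 1) * (blk3 (lmat 0 R011⁻¹) 0 0
      (lmat (-1) (-(R022⁻¹ * (Rm121 * R011⁻¹)))) (lmat 0 R022⁻¹) 0
      (lmat (-2) (R033⁻¹ * (Rm132 * (R022⁻¹ * (Rm121 * R011⁻¹))) - R033⁻¹ * (Rm231 * R011⁻¹)))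
      (lmat (-1) (-(R033⁻¹ * (Rm132 * R022⁻¹)))) (lmat 0 R033⁻¹)) := Matrix.inv_eq_right_inv hprod
  have hRd : Rε.map (lder δ hδ0) = blk3 (lmat 0 (R011.map δ)) 0 0
      (lmat (-1) (Rm121.map δ)) (lmat 0 (R022.map δ)) 0
      (lmat (-2) (Rm231.map δ)) (lmat (-1) (Rm132.map δ)) (lmat 0 (R033.map δ)) := by
    simp only [Rε]
    rw [blk3_map]
    apply blk3_ext <;> simp [lmat_map_lder, lmap_zero]
  have hR'd : R'ε.map (lder δ hδ0) = blk3 0 0 0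
      (lmat 0 (R021.map δ)) 0 0
      (lmat (-1) (Rm131.map δ)) (lmat 0 (R032.map δ)) 0 := by
    simp only [R'ε]
    rw [blk3_map]
    apply blk3_ext <;> simp [lmat_map_lder, lmap_zero, lmap_one δ hδ0 hδ1]
  have hMap : (Rε * R'ε).map (lder δ hδ0)
      = Rε.map (lder δ hδ0) * R'ε + Rε * R'ε.map (lder δ hδ0) :=
    map_derivation_mul (lder δ hδ0) (lder_add' δ hδ0 hδadd) (lder_mul δ hδ0 hδadd hδmul) Rε R'ε
  have hAtil : Atil = ((blk3 1 0 0
      (lmat 0 (-R021)) 1 0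
      (lmat 0 (R032 * R021) + lmat (-1) (-Rm131)) (lmat 0 (-R032)) 1) * (blk3 (lmat 0 R011⁻¹) 0 0
      (lmat (-1) (-(R022⁻¹ * (Rm121 * R011⁻¹)))) (lmat 0 R022⁻¹) 0
      (lmat (-2) (R033⁻¹ * (Rm132 * (R022⁻¹ * (Rm121 * R011⁻¹))) - R033⁻¹ * (Rm231 * R011⁻¹)))
      (lmat (-1) (-(R033⁻¹ * (Rm132 * R022⁻¹)))) (lmat 0 R033⁻¹))) * Aε * (Rε * R'ε)
      - ((blk3 1 0 0
      (lmat 0 (-R021)) 1 0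
      (lmat 0 (R032 * R021) + lmat (-1) (-Rm131)) (lmat 0 (-R032)) 1) * (blk3 (lmat 0 R011⁻¹) 0 0
      (lmat (-1) (-(R022⁻¹ * (Rm121 * R011⁻¹)))) (lmat 0 R022⁻¹) 0
      (lmat (-2) (R033⁻¹ * (Rm132 * (R022⁻¹ * (Rm121 * R011⁻¹))) - R033⁻¹ * (Rm231 * R011⁻¹)))
      (lmat (-1) (-(R033⁻¹ * (Rm132 * R022⁻¹)))) (lmat 0 R033⁻¹))) * (Rε.map (lder δ hδ0) * R'ε + Rε * R'ε.map (lder δ hδ0)) := by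
    show gaugeTransform δ hδ0 Aε (Rε * R'ε) = _
    unfold gaugeTransform
    rw [hInveq, hMap]
  refine ⟨?_, ?_, ?_, ?_, ?_, ?_, ?_, ?_, ?_⟩ <;> intro a b
  · rw [lcoeff_eq_lcoeffM, hAtil, hRd, hR'd]
    simp only [Aε, Rε, R'ε, connMat]
    simp only [blk3_mul, blk3_add, blk3_sub, lcoeffM_blk3, blk3_app11]
    simp [Matrix.mul_add, Matrix.add_mul, Matrix.mul_sub, Matrix.sub_mul, Matrix.neg_mul, Matrix.mul_neg, Matrix.mul_assoc, Matrix.mul_one, Matrix.one_mul, Matrix.mul_zero, Matrix.zero_mul, lmat_mul, lmat_add, lmat_sub, lmat_neg, lmat_zero, lmat_one, Matrix.mul_nonsing_inv_cancel_left, Matrix.nonsing_inv_mul_cancel_left, Matrix.mul_nonsing_inv, Matrix.nonsing_inv_mul, hR011, hR022, hR033, heq1, heq2, heq3, heq4, heq5, heq6, heq7, heq8, heq9, lcoeffM_add, lcoeffM_sub, lcoeffM_neg, lcoeffM_lmat, lcoeffM_zero, Matrix.add_apply, Matrix.sub_apply, Matrix.neg_apply, Matrix.zero_apply]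
    try abel
  · rw [lcoeff_eq_lcoeffM, hAtil, hRd, hR'd]
    simp only [Aε, Rε, R'ε, connMat]
    simp only [blk3_mul, blk3_add, blk3_sub, lcoeffM_blk3, blk3_app21]
    simp [Matrix.mul_add, Matrix.add_mul, Matrix.mul_sub, Matrix.sub_mul, Matrix.neg_mul, Matrix.mul_neg, Matrix.mul_assoc, Matrix.mul_one, Matrix.one_mul, Matrix.mul_zero, Matrix.zero_mul, lmat_mul, lmat_add, lmat_sub, lmat_neg, lmat_zero, lmat_one, Matrix.mul_nonsing_inv_cancel_left, Matrix.nonsing_inv_mul_cancel_left, Matrix.mul_nonsing_inv, Matrix.nonsing_inv_mul, hR011, hR022, hR033, heq1, heq2, heq3, heq4, heq5, heq6, heq7, heq8, heq9, lcoeffM_add, lcoeffM_sub, lcoeffM_neg, lcoeffM_lmat, lcoeffM_zero, Matrix.add_apply, Matrix.sub_apply, Matrix.neg_apply, Matrix.zero_apply]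
    try abel
  · rw [lcoeff_eq_lcoeffM, hAtil, hRd, hR'd]
    simp only [Aε, Rε, R'ε, connMat]
    simp only [blk3_mul, blk3_add, blk3_sub, lcoeffM_blk3, blk3_app21]
    simp [Matrix.mul_add, Matrix.add_mul, Matrix.mul_sub, Matrix.sub_mul, Matrix.neg_mul, Matrix.mul_neg, Matrix.mul_assoc, Matrix.mul_one, Matrix.one_mul, Matrix.mul_zero, Matrix.zero_mul, lmat_mul, lmat_add, lmat_sub, lmat_neg, lmat_zero, lmat_one, Matrix.mul_nonsing_inv_cancel_left, Matrix.nonsing_inv_mul_cancel_left, Matrix.mul_nonsing_inv, Matrix.nonsing_inv_mul, hR011, hR022, hR033, heq1, heq2, heq3, heq4, heq5, heq6, heq7, heq8, heq9, lcoeffM_add, lcoeffM_sub, lcoeffM_neg, lcoeffM_lmat, lcoeffM_zero, Matrix.add_apply, Matrix.sub_apply, Matrix.neg_apply, Matrix.zero_apply]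
    try abel
  · rw [lcoeff_eq_lcoeffM, hAtil, hRd, hR'd]
    simp only [Aε, Rε, R'ε, connMat]
    simp only [blk3_mul, blk3_add, blk3_sub, lcoeffM_blk3, blk3_app31]
    simp [Matrix.mul_add, Matrix.add_mul, Matrix.mul_sub, Matrix.sub_mul, Matrix.neg_mul, Matrix.mul_neg, Matrix.mul_assoc, Matrix.mul_one, Matrix.one_mul, Matrix.mul_zero, Matrix.zero_mul, lmat_mul, lmat_add, lmat_sub, lmat_neg, lmat_zero, lmat_one, Matrix.mul_nonsing_inv_cancel_left, Matrix.nonsing_inv_mul_cancel_left, Matrix.mul_nonsing_inv, Matrix.nonsing_inv_mul, hR011, hR022, hR033, heq1, heq2, heq3, heq4, heq5, heq6, heq7, heq8, heq9, lcoeffM_add, lcoeffM_sub, lcoeffM_neg, lcoeffM_lmat, lcoeffM_zero, Matrix.add_apply, Matrix.sub_apply, Matrix.neg_apply, Matrix.zero_apply]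
    try abel
  · rw [lcoeff_eq_lcoeffM, hAtil, hRd, hR'd]
    simp only [Aε, Rε, R'ε, connMat]
    simp only [blk3_mul, blk3_add, blk3_sub, lcoeffM_blk3, blk3_app31]
    simp [Matrix.mul_add, Matrix.add_mul, Matrix.mul_sub, Matrix.sub_mul, Matrix.neg_mul, Matrix.mul_neg, Matrix.mul_assoc, Matrix.mul_one, Matrix.one_mul, Matrix.mul_zero, Matrix.zero_mul, lmat_mul, lmat_add, lmat_sub, lmat_neg, lmat_zero, lmat_one, Matrix.mul_nonsing_inv_cancel_left, Matrix.nonsing_inv_mul_cancel_left, Matrix.mul_nonsing_inv, Matrix.nonsing_inv_mul, hR011, hR022, hR033, heq1, heq2, heq3, heq4, heq5, heq6, heq7, heq8, heq9, lcoeffM_add, lcoeffM_sub, lcoeffM_neg, lcoeffM_lmat, lcoeffM_zero, Matrix.add_apply, Matrix.sub_apply, Matrix.neg_apply, Matrix.zero_apply]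
    try abel
  · rw [lcoeff_eq_lcoeffM, hAtil, hRd, hR'd]
    simp only [Aε, Rε, R'ε, connMat]
    simp only [blk3_mul, blk3_add, blk3_sub, lcoeffM_blk3, blk3_app22]
    simp [Matrix.mul_add, Matrix.add_mul, Matrix.mul_sub, Matrix.sub_mul, Matrix.neg_mul, Matrix.mul_neg, Matrix.mul_assoc, Matrix.mul_one, Matrix.one_mul, Matrix.mul_zero, Matrix.zero_mul, lmat_mul, lmat_add, lmat_sub, lmat_neg, lmat_zero, lmat_one, Matrix.mul_nonsing_inv_cancel_left, Matrix.nonsing_inv_mul_cancel_left, Matrix.mul_nonsing_inv, Matrix.nonsing_inv_mul, hR011, hR022, hR033, heq1, heq2, heq3, heq4, heq5, heq6, heq7, heq8, heq9, lcoeffM_add, lcoeffM_sub, lcoeffM_neg, lcoeffM_lmat, lcoeffM_zero, Matrix.add_apply, Matrix.sub_apply, Matrix.neg_apply, Matrix.zero_apply]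
    try abel
  · rw [lcoeff_eq_lcoeffM, hAtil, hRd, hR'd]
    simp only [Aε, Rε, R'ε, connMat]
    simp only [blk3_mul, blk3_add, blk3_sub, lcoeffM_blk3, blk3_app32]
    simp [Matrix.mul_add, Matrix.add_mul, Matrix.mul_sub, Matrix.sub_mul, Matrix.neg_mul, Matrix.mul_neg, Matrix.mul_assoc, Matrix.mul_one, Matrix.one_mul, Matrix.mul_zero, Matrix.zero_mul, lmat_mul, lmat_add, lmat_sub, lmat_neg, lmat_zero, lmat_one, Matrix.mul_nonsing_inv_cancel_left, Matrix.nonsing_inv_mul_cancel_left, Matrix.mul_nonsing_inv, Matrix.nonsing_inv_mul, hR011, hR022, hR033, heq1, heq2, heq3, heq4, heq5, heq6, heq7, heq8, heq9, lcoeffM_add, lcoeffM_sub, lcoeffM_neg, lcoeffM_lmat, lcoeffM_zero, Matrix.add_apply, Matrix.sub_apply, Matrix.neg_apply, Matrix.zero_apply]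
    try abel
  · rw [lcoeff_eq_lcoeffM, hAtil, hRd, hR'd]
    simp only [Aε, Rε, R'ε, connMat]
    simp only [blk3_mul, blk3_add, blk3_sub, lcoeffM_blk3, blk3_app32]
    simp [Matrix.mul_add, Matrix.add_mul, Matrix.mul_sub, Matrix.sub_mul, Matrix.neg_mul, Matrix.mul_neg, Matrix.mul_assoc, Matrix.mul_one, Matrix.one_mul, Matrix.mul_zero, Matrix.zero_mul, lmat_mul, lmat_add, lmat_sub, lmat_neg, lmat_zero, lmat_one, Matrix.mul_nonsing_inv_cancel_left, Matrix.nonsing_inv_mul_cancel_left, Matrix.mul_nonsing_inv, Matrix.nonsing_inv_mul, hR011, hR022, hR033, heq1, heq2, heq3, heq4, heq5, heq6, heq7, heq8, heq9, lcoeffM_add, lcoeffM_sub, lcoeffM_neg, lcoeffM_lmat, lcoeffM_zero, Matrix.add_apply, Matrix.sub_apply, Matrix.neg_apply, Matrix.zero_apply]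
    try abel
  · rw [lcoeff_eq_lcoeffM, hAtil, hRd, hR'd]
    simp only [Aε, Rε, R'ε, connMat]
    simp only [blk3_mul, blk3_add, blk3_sub, lcoeffM_blk3, blk3_app33]
    simp [Matrix.mul_add, Matrix.add_mul, Matrix.mul_sub, Matrix.sub_mul, Matrix.neg_mul, Matrix.mul_neg, Matrix.mul_assoc, Matrix.mul_one, Matrix.one_mul, Matrix.mul_zero, Matrix.zero_mul, lmat_mul, lmat_add, lmat_sub, lmat_neg, lmat_zero, lmat_one, Matrix.mul_nonsing_inv_cancel_left, Matrix.nonsing_inv_mul_cancel_left, Matrix.mul_nonsing_inv, Matrix.nonsing_inv_mul, hR011, hR022, hR033, heq1, heq2, heq3, heq4, heq5, heq6, heq7, heq8, heq9, lcoeffM_add, lcoeffM_sub, lcoeffM_neg, lcoeffM_lmat, lcoeffM_zero, Matrix.add_apply, Matrix.sub_apply, Matrix.neg_apply, Matrix.zero_apply]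
    try abel
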